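/- Let μ be a partition that is not a hook (equivalently, the Ferrers diagram of μ contains the cell (2,2)), and let ℓ ≥ 1. Then the signed sum Σ_T sgn(T) over all special rim hook tabloids T of shape μ having exactly ℓ rim hooks equals 0. (This is proved via a sign-reversing involution σ on the set of such tabloids which modifies only the rim hook containing cell (1,1) and the rim hook containing cell (2,2).) -/

import Mathlib

open Finset

/-! ### Basic poset / graph notions -/

/-- Two elements of a poset are incomparable. -/
def Incomp {P : Type*} [PartialOrder P] (x y : P) : Prop := ¬ x ≤ y ∧ ¬ y ≤ x

/-- The incomparability graph of a poset. -/
def incompGraph (P : Type*) [PartialOrder P] : SimpleGraph P where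
  Adj x y := Incomp x y
  symm := ⟨fun _ _ h => ⟨h.2, h.1⟩⟩
  loopless := ⟨fun _ h => h.1 le_rfl⟩

/-- A poset is (3+1)-free if no induced subposet is the disjoint union of a
3-element chain and a 1-element chain. -/
def ThreeOneFree (P : Type*) [PartialOrder P] : Prop :=
  ¬ ∃ a b c x : P, a < b ∧ b < c ∧ Incomp a x ∧ Incomp b x ∧ Incomp c x

/-- A graph is clawfree if it has no induced `K_{1,3}`. -/
def Clawfree {V : Type*} (G : SimpleGraph V) : Prop :=
  ¬ ∃ c a b x : V, a ≠ b ∧ a ≠ x ∧ b ≠ x ∧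
    G.Adj c a ∧ G.Adj c b ∧ G.Adj c x ∧ ¬ G.Adj a b ∧ ¬ G.Adj a x ∧ ¬ G.Adj b x

/-! ### Orientations -/

/-- An orientation of a simple graph: each edge receives exactly one direction. -/
structure GraphOrientation {V : Type*} (G : SimpleGraph V) where
  dir : V → V → Prop
  dir_adj : ∀ u v, dir u v → G.Adj u v
  total : ∀ u v, G.Adj u v → (dir u v ↔ ¬ dir v u)

/-- An orientation is acyclic if it has no directed cycles. -/
def GraphOrientation.Acyclic {V : Type*} {G : SimpleGraph V} (o : GraphOrientation G) : Prop :=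
  ∀ v, ¬ Relation.TransGen o.dir v v

/-- A sink of an orientation: a vertex with no outgoing edges. -/
def GraphOrientation.IsSink {V : Type*} {G : SimpleGraph V} (o : GraphOrientation G) (v : V) : Prop :=
  ∀ u, ¬ o.dir v u

/-- The number of acyclic orientations of `G` with exactly `l` sinks. -/
noncomputable def numAcyclicOrientations {V : Type*} (G : SimpleGraph V) (l : ℕ) : ℕ :=
  Nat.card {o : GraphOrientation G // o.Acyclic ∧ Nat.card {v : V // o.IsSink v} = l}

/-! ### Symmetric functions as formal power series in `x_0, x_1, x_2, …` -/

/-- A proper coloring of a graph with colors in `ℕ`. -/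
def IsProperColoring {V : Type*} (G : SimpleGraph V) (κ : V → ℕ) : Prop :=
  ∀ u v, G.Adj u v → κ u ≠ κ v

/-- The chromatic symmetric function of a graph, as a formal power series:
the coefficient of the monomial `m` is the number of proper colorings of content `m`. -/
noncomputable def chromSymFun {V : Type*} [Fintype V] [DecidableEq V] (G : SimpleGraph V) :
    MvPowerSeries ℕ ℚ :=
  fun m => (Nat.card {κ : V → ℕ // IsProperColoring G κ ∧
      ∀ i : ℕ, Nat.card {v : V // κ v = i} = m i} : ℚ)

/-- The elementary symmetric function `e_k` as a power series. -/
noncomputable def esymmPS (k : ℕ) : MvPowerSeries ℕ ℚ :=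
  fun m => if (∀ i ∈ m.support, m i = 1) ∧ m.support.card = k then 1 else 0

/-- The elementary symmetric function `e_λ` attached to a partition. -/
noncomputable def elemPS {d : ℕ} (lam : Nat.Partition d) : MvPowerSeries ℕ ℚ :=
  (lam.parts.map esymmPS).prod

/-- The content of a semistandard Young tableau: the number of cells with entry `i`. -/
noncomputable def ssytContent {μ : YoungDiagram} (T : SemistandardYoungTableau μ) (i : ℕ) : ℕ :=
  Nat.card {c : ℕ × ℕ // c ∈ μ ∧ T c.1 c.2 = i}

/-- The Schur function `s_μ` as a power series: the coefficient of the monomial `m` is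
the number of semistandard Young tableaux of shape `μ` and content `m`. -/
noncomputable def schurPS (μ : YoungDiagram) : MvPowerSeries ℕ ℚ :=
  fun m => (Nat.card {T : SemistandardYoungTableau μ // ∀ i, ssytContent T i = m i} : ℚ)

/-- The Kostka number `K_{μ,ν}`: the number of semistandard Young tableaux
of shape `μ` and content the sequence `ν` (given as a list). -/
noncomputable def kostka (μ : YoungDiagram) (ν : List ℕ) : ℕ :=
  Nat.card {T : SemistandardYoungTableau μ // ∀ i, ssytContent T i = ν.getD i 0}

/-- The Young diagram of a partition. -/
def Nat.Partition.toYoung {d : ℕ} (lam : Nat.Partition d) : YoungDiagram :=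
  YoungDiagram.ofRowLens (lam.parts.sort (· ≥ ·)) (List.sortedGE_iff_pairwise.2 (Multiset.pairwise_sort ..))

/-- The hook-shaped Young diagram with `d` cells in total,
`k` of which lie in the first column. -/
def hookDiagram (d k : ℕ) : YoungDiagram :=
  YoungDiagram.ofRowLens ((d - k + 1) :: List.replicate (k - 1) 1) (by
    refine List.sortedGE_iff_pairwise.2 (List.pairwise_cons.2 ⟨?_, ?_⟩)
    · intro b hb
      rw [List.mem_replicate] at hb
      omega
    · exact List.pairwise_replicate.2 (Or.inr le_rfl))

/-! ### P-tableaux -/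

/-- A `P`-tableau of shape `μ` (Chow's convention): a filling of the cells of `μ` by the
elements of `P`, each used exactly once, strictly increasing down columns, and such that
an entry is never greater than its right neighbour. -/
structure PTableau (P : Type*) [PartialOrder P] (μ : YoungDiagram) where
  entry : ℕ → ℕ → P
  bijOn : Set.BijOn (fun c : ℕ × ℕ => entry c.1 c.2) ↑μ.cells Set.univ
  col_lt : ∀ i j, (i, j) ∈ μ → (i + 1, j) ∈ μ → entry i j < entry (i + 1) j
  row_not_gt : ∀ i j, (i, j) ∈ μ → (i, j + 1) ∈ μ → ¬ entry i (j + 1) < entry i j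

/-! ### Rim hooks and special rim hook tabloids -/

/-- Two cells are edgewise adjacent. -/
def CellAdj (a b : ℕ × ℕ) : Prop :=
  (a.1 = b.1 ∧ (a.2 = b.2 + 1 ∨ b.2 = a.2 + 1)) ∨
  (a.2 = b.2 ∧ (a.1 = b.1 + 1 ∨ b.1 = a.1 + 1))

/-- A rim hook (border strip): a nonempty, edgewise connected set of cells
containing no 2×2 square. -/
def IsRimHook (S : Finset (ℕ × ℕ)) : Prop :=
  S.Nonempty ∧
  (∀ a ∈ S, ∀ b ∈ S, Relation.ReflTransGen (fun x y => x ∈ S ∧ y ∈ S ∧ CellAdj x y) a b) ∧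
  ∀ i j : ℕ, ¬ ((i, j) ∈ S ∧ (i + 1, j) ∈ S ∧ (i, j + 1) ∈ S ∧ (i + 1, j + 1) ∈ S)

/-- A rim hook is special if it contains a cell in the first column. -/
def IsSpecial (S : Finset (ℕ × ℕ)) : Prop := ∃ i, (i, 0) ∈ S

/-- `PeelSeq μ L`: the rim hooks in the list `L` can be successively removed from `μ`,
each intermediate residue being a Young diagram, ending with the empty diagram. -/
def PeelSeq : YoungDiagram → List (Finset (ℕ × ℕ)) → Prop
  | μ, [] => μ.cells = ∅
  | μ, S :: L => ∃ ν : YoungDiagram,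
      S ⊆ μ.cells ∧ ν.cells = μ.cells \ S ∧ IsRimHook S ∧ IsSpecial S ∧ PeelSeq ν L

/-- A special rim hook tabloid of shape `μ`: a decomposition of the cells of `μ` into
disjoint special rim hooks which can be removed in some order, each intermediate residue
being a Young diagram. -/
structure SpecialRimHookTabloid (μ : YoungDiagram) where
  hooks : Finset (Finset (ℕ × ℕ))
  peelable : ∃ L : List (Finset (ℕ × ℕ)), L.Nodup ∧ L.toFinset = hooks ∧ PeelSeq μ L

/-- The height of a rim hook: the number of rows it meets. -/
def hookHeight (S : Finset (ℕ × ℕ)) : ℕ := (S.image Prod.fst).card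

/-- The sign of a special rim hook tabloid. -/
noncomputable def SpecialRimHookTabloid.sign {μ : YoungDiagram}
    (T : SpecialRimHookTabloid μ) : ℤ :=
  ∏ S ∈ T.hooks, (-1 : ℤ) ^ (hookHeight S - 1)

/-- A special rim hook tabloid has type `λ` if the multiset of sizes of its rim hooks
is the multiset of parts of `λ`. -/
def SpecialRimHookTabloid.HasType {μ : YoungDiagram} (T : SpecialRimHookTabloid μ)
    {d : ℕ} (lam : Nat.Partition d) : Prop :=
  T.hooks.val.map Finset.card = lam.parts

/-!
A special rim hook whose removal leaves a Young diagram must contain the bottom cell of the first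
column, so it is the border strip running from some row `r` down to that cell; removing it keeps
the rows above `r` and shifts every later row up by one, shortened by one cell. Expanding by the
hook removed first gives a recursion for the signed count `E(μ, ℓ)` over these strips, from which
`E(μ, ℓ)` does not depend on the length of the (nonempty) first row of `μ`. If `μ` contains the
cell `(2,2)` (`(1, 1)` with 0-based indices), the residues of the strips starting in rows 1 and 2
differ only in their first row while the two strips have heights of opposite parity, so their
contributions cancel; every other residue still contains `(2,2)` and contributes zero by
induction on `|μ|`.
-/

def CellAdjIn (S : Finset (ℕ × ℕ)) (a b : ℕ × ℕ) : Prop := a ∈ S ∧ b ∈ S ∧ CellAdj a b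

theorem CellAdj.symm {a b : ℕ × ℕ} (h : CellAdj a b) : CellAdj b a := by
  unfold CellAdj at *
  omega

instance (S : Finset (ℕ × ℕ)) : Std.Symm (CellAdjIn S) :=
  ⟨fun _ _ h => ⟨h.2.1, h.1, h.2.2.symm⟩⟩

theorem exists_vertical_of_reflTransGen {S : Finset (ℕ × ℕ)} {a b : ℕ × ℕ}
    (h : Relation.ReflTransGen (CellAdjIn S) a b) {i : ℕ} (hai : a.1 ≤ i) (hib : i < b.1) :
    ∃ j, (i, j) ∈ S ∧ (i + 1, j) ∈ S := by
  induction h with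
  | refl => omega
  | @tail b c _ hbc ih =>
    obtain ⟨hb, hc, hadj⟩ := hbc
    by_cases hi : i < b.1
    · exact ih hi
    · obtain ⟨rfl, hcb⟩ : b.1 = i ∧ c = (i + 1, b.2) := by
        obtain ⟨c₁, c₂⟩ := c
        unfold CellAdj at hadj
        simp only [Prod.mk.injEq]
        omega
      exact ⟨b.2, hb, hcb ▸ hc⟩

namespace YoungDiagram

def rimStrip (μ : YoungDiagram) (r : ℕ) : Finset (ℕ × ℕ) :=
  μ.cells.filter fun c => r ≤ c.1 ∧ μ.rowLen (c.1 + 1) ≤ c.2 + 1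

def peel (μ : YoungDiagram) (r : ℕ) : YoungDiagram where
  cells := μ.cells.filter fun c => c.1 < r ∨ c.2 + 1 < μ.rowLen (c.1 + 1)
  isLowerSet := by
    rintro ⟨i, j⟩ ⟨i', j'⟩ ⟨hi : i' ≤ i, hj : j' ≤ j⟩ hc
    simp only [coe_filter, Set.mem_ofPred_eq, mem_cells] at hc ⊢
    have := μ.rowLen_anti (i' + 1) (i + 1) (by omega)
    exact ⟨μ.up_left_mem hi hj hc.1, by omega⟩

variable {μ : YoungDiagram} {r i j : ℕ}

theorem mem_rimStrip :
    (i, j) ∈ μ.rimStrip r ↔ j < μ.rowLen i ∧ r ≤ i ∧ μ.rowLen (i + 1) ≤ j + 1 := by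
  rw [rimStrip, mem_filter, mem_cells, mem_iff_lt_rowLen]

theorem mem_peel : (i, j) ∈ μ.peel r ↔ j < μ.rowLen i ∧ (i < r ∨ j + 1 < μ.rowLen (i + 1)) := by
  rw [← mem_cells, peel, mem_filter, mem_cells, mem_iff_lt_rowLen]

theorem rimStrip_subset_cells : μ.rimStrip r ⊆ μ.cells :=
  filter_subset _ _

theorem cells_peel : (μ.peel r).cells = μ.cells \ μ.rimStrip r := by
  ext ⟨i, j⟩
  rw [mem_sdiff, mem_cells, mem_cells, mem_peel, mem_iff_lt_rowLen, mem_rimStrip]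
  omega

theorem rowLen_peel :
    (μ.peel r).rowLen i = if i < r then μ.rowLen i else μ.rowLen (i + 1) - 1 := by
  refine eq_of_forall_lt_iff fun j => ?_
  have := μ.rowLen_anti i (i + 1) i.le_succ
  rw [← mem_iff_lt_rowLen, mem_peel]
  split_ifs <;> omega

theorem rowLen_pos_iff : 0 < μ.rowLen i ↔ i < μ.colLen 0 := by
  rw [← mem_iff_lt_rowLen, mem_iff_lt_colLen]

theorem bottom_mem_rimStrip (hr : r < μ.colLen 0) : (μ.colLen 0 - 1, 0) ∈ μ.rimStrip r := by
  have h₁ : 0 < μ.rowLen (μ.colLen 0 - 1) := rowLen_pos_iff.2 (by omega)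
  have h₂ := rowLen_pos_iff.not.2 (show ¬ μ.colLen 0 - 1 + 1 < μ.colLen 0 by omega)
  rw [mem_rimStrip]
  omega

theorem isSpecial_rimStrip (hr : r < μ.colLen 0) : IsSpecial (μ.rimStrip r) :=
  ⟨_, bottom_mem_rimStrip hr⟩

theorem hookHeight_rimStrip :
    hookHeight (μ.rimStrip r) = μ.colLen 0 - r := by
  suffices (μ.rimStrip r).image Prod.fst = Ico r (μ.colLen 0) by
    rw [hookHeight, this, Nat.card_Ico]
  ext i
  simp only [mem_image, mem_Ico, Prod.exists, exists_and_right, exists_eq_right, mem_rimStrip]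
  constructor
  · rintro ⟨j, hj, hri, -⟩
    exact ⟨hri, rowLen_pos_iff.1 (by omega)⟩
  · rintro ⟨hri, hi⟩
    have := rowLen_pos_iff.2 hi
    have := μ.rowLen_anti i (i + 1) i.le_succ
    exact ⟨μ.rowLen (i + 1) - 1, by omega, hri, by omega⟩

theorem card_peel_lt (hr : r < μ.colLen 0) : (μ.peel r).cells.card < μ.cells.card := by
  rw [cells_peel]
  exact card_lt_card (sdiff_ssubset rimStrip_subset_cells ⟨_, bottom_mem_rimStrip hr⟩)

theorem reflTransGen_bottom_of_mem_rimStrip {c : ℕ × ℕ} (hc : c ∈ μ.rimStrip r) :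
    Relation.ReflTransGen (CellAdjIn (μ.rimStrip r)) c (μ.colLen 0 - 1, 0) := by
  obtain ⟨i, j⟩ := c
  induction hn : μ.colLen 0 - i + j generalizing i j with
  | zero =>
    have := rowLen_pos_iff.1 (Nat.zero_lt_of_lt (mem_rimStrip.1 hc).1)
    omega
  | succ n ih =>
    have hmem := mem_rimStrip.1 hc
    have hi := rowLen_pos_iff.1 (Nat.zero_lt_of_lt hmem.1)
    rcases lt_or_ge j (μ.rowLen (i + 1)) with hdown | hleft
    · have hi' := rowLen_pos_iff.1 (Nat.zero_lt_of_lt hdown)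
      have hnext : (i + 1, j) ∈ μ.rimStrip r := by
        have := μ.rowLen_anti (i + 1) (i + 1 + 1) (by omega)
        rw [mem_rimStrip]
        omega
      exact .head ⟨hc, hnext, by unfold CellAdj; omega⟩ (ih _ _ hnext (by omega))
    · rcases Nat.eq_zero_or_pos j with rfl | hj
      · have := rowLen_pos_iff.not.1 (by omega : ¬ 0 < μ.rowLen (i + 1))
        rw [show i = μ.colLen 0 - 1 by omega]
      · have hnext : (i, j - 1) ∈ μ.rimStrip r := by
          rw [mem_rimStrip]
          omega
        exact .head ⟨hc, hnext, by unfold CellAdj; omega⟩ (ih _ _ hnext (by omega))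

theorem isRimHook_rimStrip (hr : r < μ.colLen 0) : IsRimHook (μ.rimStrip r) := by
  refine ⟨⟨_, bottom_mem_rimStrip hr⟩, fun a ha b hb => ?_, fun i j => ?_⟩
  · exact (reflTransGen_bottom_of_mem_rimStrip ha).trans
      (Std.Symm.symm _ _ (reflTransGen_bottom_of_mem_rimStrip hb))
  · simp only [mem_rimStrip]
    omega

variable {ν : YoungDiagram} {S : Finset (ℕ × ℕ)}

theorem mem_iff_rowLen_of_cells_eq_sdiff (hS : S ⊆ μ.cells) (hν : ν.cells = μ.cells \ S) :
    (i, j) ∈ S ↔ ν.rowLen i ≤ j ∧ j < μ.rowLen i := by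
  rw [← Finset.sdiff_sdiff_eq_self hS, ← hν, mem_sdiff, mem_cells,
    mem_cells, mem_iff_lt_rowLen, mem_iff_lt_rowLen]
  omega

theorem rowLen_le_of_cells_eq_sdiff (hν : ν.cells = μ.cells \ S) (i : ℕ) :
    ν.rowLen i ≤ μ.rowLen i := by
  by_contra! h
  have : (i, μ.rowLen i) ∈ ν.cells := by
    rwa [mem_cells, mem_iff_lt_rowLen]
  rw [hν, mem_sdiff, mem_cells, mem_iff_lt_rowLen] at this
  exact lt_irrefl _ this.1

theorem rowLen_succ_le_of_cells_eq_sdiff (hS : S ⊆ μ.cells) (hν : ν.cells = μ.cells \ S)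
    (hsq : ∀ i j : ℕ, ¬ ((i, j) ∈ S ∧ (i + 1, j) ∈ S ∧ (i, j + 1) ∈ S ∧ (i + 1, j + 1) ∈ S))
    (i : ℕ) : μ.rowLen (i + 1) ≤ ν.rowLen i + 1 := by
  by_contra! h
  have := μ.rowLen_anti i (i + 1) i.le_succ
  have := ν.rowLen_anti i (i + 1) i.le_succ
  refine hsq i (ν.rowLen i) ?_
  simp only [mem_iff_rowLen_of_cells_eq_sdiff hS hν]
  omega

theorem exists_eq_rimStrip_of_cells_eq_sdiff (hS : S ⊆ μ.cells) (hν : ν.cells = μ.cells \ S)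
    (hrim : IsRimHook S) (hspecial : IsSpecial S) :
    ∃ r < μ.colLen 0, S = μ.rimStrip r ∧ ν = μ.peel r := by
  obtain ⟨hne, hconn, hsq⟩ := hrim
  obtain ⟨i₀, hi₀⟩ := hspecial
  obtain ⟨⟨r, j₀⟩, hr, hmin⟩ := exists_min_image S Prod.fst hne
  have hmem := fun i j => mem_iff_rowLen_of_cells_eq_sdiff (i := i) (j := j) hS hν
  have hri₀ : r ≤ i₀ := hmin _ hi₀
  have hi₀K : i₀ < μ.colLen 0 := mem_iff_lt_colLen.1 (hS hi₀)
  -- Rows above `r` are untouched; between `r` and `i₀` a path inside `S` crosses every row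
  -- boundary, and from `i₀` on `ν` is empty. With no `2 × 2` square this pins down `ν`.
  have hrowLen : ∀ i, ν.rowLen i = (μ.peel r).rowLen i := by
    intro i
    have hle := rowLen_le_of_cells_eq_sdiff hν i
    have hsucc := rowLen_succ_le_of_cells_eq_sdiff hS hν hsq i
    rw [rowLen_peel]
    split_ifs with hir
    · by_contra hlt
      exact absurd (hmin (i, ν.rowLen i) ((hmem _ _).2 ⟨le_rfl, by omega⟩)) (by simpa using hir)
    · rcases lt_or_ge i i₀ with hii₀ | hi₀i
      · obtain ⟨j, hj, hj'⟩ :=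
          exists_vertical_of_reflTransGen (hconn _ hr _ hi₀) (not_lt.1 hir) hii₀
        have := (hmem _ _).1 hj
        have := (hmem _ _).1 hj'
        omega
      · have := ν.rowLen_anti i₀ i hi₀i
        have := (hmem _ _).1 hi₀
        omega
  have hνr : ν = μ.peel r := SetLike.ext fun ⟨i, j⟩ => by
    rw [mem_iff_lt_rowLen, mem_iff_lt_rowLen, hrowLen]
  refine ⟨r, by omega, ?_, hνr⟩
  rw [← Finset.sdiff_sdiff_eq_self hS, ← hν, hνr, cells_peel,
    Finset.sdiff_sdiff_eq_self rimStrip_subset_cells]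

end YoungDiagram

theorem peelSeq_cons_iff {μ : YoungDiagram} {S : Finset (ℕ × ℕ)} {L : List (Finset (ℕ × ℕ))} :
    PeelSeq μ (S :: L) ↔ ∃ r < μ.colLen 0, S = μ.rimStrip r ∧ PeelSeq (μ.peel r) L := by
  constructor
  · rintro ⟨ν, hS, hν, hrim, hspecial, hL⟩
    obtain ⟨r, hr, rfl, rfl⟩ :=
      YoungDiagram.exists_eq_rimStrip_of_cells_eq_sdiff hS hν hrim hspecial
    exact ⟨r, hr, rfl, hL⟩
  · rintro ⟨r, hr, rfl, hL⟩
    exact ⟨μ.peel r, μ.rimStrip_subset_cells, μ.cells_peel,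
      μ.isRimHook_rimStrip hr, μ.isSpecial_rimStrip hr, hL⟩

theorem PeelSeq.subset_cells {μ : YoungDiagram} {L : List (Finset (ℕ × ℕ))} (hL : PeelSeq μ L)
    {S : Finset (ℕ × ℕ)} (hS : S ∈ L) : S ⊆ μ.cells := by
  induction L generalizing μ with
  | nil => simp at hS
  | cons T L ih =>
    obtain ⟨ν, hT, hν, -, -, hL⟩ := hL
    rcases List.mem_cons.1 hS with rfl | hS
    · exact hT
    · exact (ih hL hS).trans (hν ▸ sdiff_subset)

def IsSpecialRimHookTabloid (μ : YoungDiagram) (H : Finset (Finset (ℕ × ℕ))) : Prop :=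
  ∃ L : List (Finset (ℕ × ℕ)), L.Nodup ∧ L.toFinset = H ∧ PeelSeq μ L

namespace IsSpecialRimHookTabloid

variable {μ : YoungDiagram} {H : Finset (Finset (ℕ × ℕ))} {r : ℕ}

theorem subset_cells (hH : IsSpecialRimHookTabloid μ H) {S : Finset (ℕ × ℕ)} (hS : S ∈ H) :
    S ⊆ μ.cells := by
  obtain ⟨L, -, rfl, hL⟩ := hH
  exact hL.subset_cells (List.mem_toFinset.1 hS)

theorem empty_iff : IsSpecialRimHookTabloid μ ∅ ↔ (0, 0) ∉ μ := by
  have hcells : μ.cells = ∅ ↔ (0, 0) ∉ μ := by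
    rw [eq_empty_iff_forall_notMem]
    exact ⟨fun h => by simpa using h (0, 0),
      fun h c hc => h (μ.up_left_mem (Nat.zero_le _) (Nat.zero_le _) ((μ.mem_cells c).1 hc))⟩
  rw [← hcells]
  exact ⟨fun ⟨L, _, hL, hpeel⟩ => by rwa [(List.toFinset_eq_empty_iff L).1 hL] at hpeel,
    fun h => ⟨[], List.nodup_nil, rfl, h⟩⟩

theorem bottom_notMem (hr : r < μ.colLen 0) (hH : IsSpecialRimHookTabloid (μ.peel r) H)
    {S : Finset (ℕ × ℕ)} (hS : S ∈ H) : (μ.colLen 0 - 1, 0) ∉ S := fun hbot => by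
  have := hH.subset_cells hS hbot
  rw [YoungDiagram.cells_peel, mem_sdiff] at this
  exact this.2 (YoungDiagram.bottom_mem_rimStrip hr)

theorem rimStrip_notMem (hr : r < μ.colLen 0) (hH : IsSpecialRimHookTabloid (μ.peel r) H) :
    μ.rimStrip r ∉ H := fun hmem =>
  hH.bottom_notMem hr hmem (YoungDiagram.bottom_mem_rimStrip hr)

theorem insert_rimStrip (hr : r < μ.colLen 0) (hH : IsSpecialRimHookTabloid (μ.peel r) H) :
    IsSpecialRimHookTabloid μ (insert (μ.rimStrip r) H) := by
  obtain ⟨L, hnodup, hLH, hL⟩ := hH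
  refine ⟨μ.rimStrip r :: L, List.nodup_cons.2 ⟨fun hmem => ?_, hnodup⟩, by
    rw [List.toFinset_cons, hLH], peelSeq_cons_iff.2 ⟨r, hr, rfl, hL⟩⟩
  exact rimStrip_notMem hr ⟨L, hnodup, hLH, hL⟩ (hLH ▸ List.mem_toFinset.2 hmem)

theorem insert_rimStrip_inj {r' : ℕ} {H' : Finset (Finset (ℕ × ℕ))} (hr : r < μ.colLen 0)
    (hr' : r' < μ.colLen 0) (hH : IsSpecialRimHookTabloid (μ.peel r) H)
    (hH' : IsSpecialRimHookTabloid (μ.peel r') H')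
    (heq : insert (μ.rimStrip r) H = insert (μ.rimStrip r') H') : r = r' ∧ H = H' := by
  have hrr' : r = r' := by
    rcases mem_insert.1 (heq ▸ mem_insert_self (μ.rimStrip r) H) with h | h
    · have := congrArg hookHeight h
      rw [YoungDiagram.hookHeight_rimStrip, YoungDiagram.hookHeight_rimStrip] at this
      omega
    · exact absurd (YoungDiagram.bottom_mem_rimStrip hr) (hH'.bottom_notMem hr' h)
  subst hrr'
  refine ⟨rfl, ?_⟩
  have := congrArg (erase · (μ.rimStrip r)) heq
  simpa only [erase_insert (hH.rimStrip_notMem hr), erase_insert (hH'.rimStrip_notMem hr)]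

theorem exists_rimStrip_mem (hH : IsSpecialRimHookTabloid μ H) (hne : H.Nonempty) :
    ∃ r < μ.colLen 0, μ.rimStrip r ∈ H ∧
      IsSpecialRimHookTabloid (μ.peel r) (H.erase (μ.rimStrip r)) := by
  obtain ⟨_ | ⟨S, L⟩, hnodup, rfl, hL⟩ := hH
  · simp at hne
  obtain ⟨r, hr, rfl, hpeel⟩ := peelSeq_cons_iff.1 hL
  obtain ⟨hS, hnodup⟩ := List.nodup_cons.1 hnodup
  refine ⟨r, hr, by simp, L, hnodup, ?_, hpeel⟩
  rw [List.toFinset_cons, erase_insert (mt List.mem_toFinset.1 hS)]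

end IsSpecialRimHookTabloid

open Classical in
noncomputable def tabloidHookSets (μ : YoungDiagram) (l : ℕ) : Finset (Finset (Finset (ℕ × ℕ))) :=
  μ.cells.powerset.powerset.filter fun H => H.card = l ∧ IsSpecialRimHookTabloid μ H

def hookSetSign (H : Finset (Finset (ℕ × ℕ))) : ℤ :=
  ∏ S ∈ H, (-1 : ℤ) ^ (hookHeight S - 1)

noncomputable def signedCount (μ : YoungDiagram) (l : ℕ) : ℤ :=
  ∑ H ∈ tabloidHookSets μ l, hookSetSign H

section SignedCount

variable {μ : YoungDiagram} {l : ℕ} {H : Finset (Finset (ℕ × ℕ))}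

theorem mem_tabloidHookSets :
    H ∈ tabloidHookSets μ l ↔ H.card = l ∧ IsSpecialRimHookTabloid μ H := by
  simp only [tabloidHookSets, mem_filter, mem_powerset, and_iff_right_iff_imp]
  exact fun ⟨_, hH⟩ S hS => mem_powerset.2 (hH.subset_cells hS)

theorem signedCount_zero : signedCount μ 0 = if (0, 0) ∈ μ then 0 else 1 := by
  have : tabloidHookSets μ 0 = if (0, 0) ∈ μ then ∅ else {∅} := by
    ext H
    rw [mem_tabloidHookSets, card_eq_zero]
    split_ifs with h
    · simp only [notMem_empty, iff_false, not_and]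
      rintro rfl hH
      exact IsSpecialRimHookTabloid.empty_iff.1 hH h
    · rw [mem_singleton]
      exact ⟨And.left, fun hH => ⟨hH, hH ▸ IsSpecialRimHookTabloid.empty_iff.2 h⟩⟩
  rw [signedCount, this]
  split_ifs <;> simp [hookSetSign]

theorem signedCount_succ (μ : YoungDiagram) (l : ℕ) :
    signedCount μ (l + 1) = ∑ r ∈ range (μ.colLen 0),
      (-1 : ℤ) ^ (μ.colLen 0 - r - 1) * signedCount (μ.peel r) l := by
  simp only [signedCount, mul_sum]
  rw [sum_sigma']
  symm
  refine sum_bij (fun p _ => insert (μ.rimStrip p.1) p.2) ?_ ?_ ?_ ?_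
  · rintro ⟨r, H⟩ hp
    obtain ⟨hr, hcard, hH⟩ := by simpa [mem_tabloidHookSets] using hp
    rw [mem_tabloidHookSets, card_insert_of_notMem (hH.rimStrip_notMem hr), hcard]
    exact ⟨rfl, hH.insert_rimStrip hr⟩
  · rintro ⟨r, H⟩ hp ⟨r', H'⟩ hp' heq
    obtain ⟨hr, -, hH⟩ := by simpa [mem_tabloidHookSets] using hp
    obtain ⟨hr', -, hH'⟩ := by simpa [mem_tabloidHookSets] using hp'
    obtain ⟨rfl, rfl⟩ := hH.insert_rimStrip_inj hr hr' hH' heq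
    rfl
  · intro H hH
    obtain ⟨hcard, hH⟩ := mem_tabloidHookSets.1 hH
    obtain ⟨r, hr, hmem, hpeel⟩ := hH.exists_rimStrip_mem (card_pos.1 (by omega))
    refine ⟨⟨r, H.erase (μ.rimStrip r)⟩, ?_, insert_erase hmem⟩
    simp only [mem_sigma, mem_range, mem_tabloidHookSets, card_erase_of_mem hmem, hcard]
    exact ⟨hr, rfl, hpeel⟩
  · rintro ⟨r, H⟩ hp
    obtain ⟨hr, -, hH⟩ := by simpa [mem_tabloidHookSets] using hp
    dsimp only
    unfold hookSetSign
    rw [prod_insert (hH.rimStrip_notMem hr), YoungDiagram.hookHeight_rimStrip]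

end SignedCount

theorem signedCount_eq_of_rowLen_succ_eq {μ μ' : YoungDiagram} (h₀ : (0, 0) ∈ μ ↔ (0, 0) ∈ μ')
    (h : ∀ i, μ.rowLen (i + 1) = μ'.rowLen (i + 1)) (l : ℕ) :
    signedCount μ l = signedCount μ' l := by
  induction l generalizing μ μ' with
  | zero => simp only [signedCount_zero, h₀]
  | succ l ih =>
    simp only [YoungDiagram.mem_iff_lt_rowLen] at h₀
    have hcol : μ.colLen 0 = μ'.colLen 0 := eq_of_forall_lt_iff fun i => by
      rw [← YoungDiagram.rowLen_pos_iff, ← YoungDiagram.rowLen_pos_iff]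
      cases i with
      | zero => exact h₀
      | succ i => rw [h]
    rw [signedCount_succ, signedCount_succ, hcol]
    refine sum_congr rfl fun r _ => congrArg _ (ih ?_ fun i => ?_)
    · simp only [YoungDiagram.mem_peel, h 0]
      omega
    · simp only [YoungDiagram.rowLen_peel, h]

theorem signedCount_eq_zero_of_one_one_mem {μ : YoungDiagram} (h : (1, 1) ∈ μ) (l : ℕ) :
    signedCount μ l = 0 := by
  induction hn : μ.cells.card using Nat.strong_induction_on generalizing μ l with
  | _ n ih =>
  obtain _ | l := l
  · rw [signedCount_zero, if_pos (μ.up_left_mem zero_le_one zero_le_one h)]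
  have h₁ : 1 < μ.rowLen 1 := YoungDiagram.mem_iff_lt_rowLen.1 h
  obtain ⟨k, hk⟩ : ∃ k, μ.colLen 0 = k + 2 :=
    ⟨μ.colLen 0 - 2, by have := YoungDiagram.rowLen_pos_iff.1 (zero_lt_one.trans h₁); omega⟩
  have hrest : ∀ r ∈ range k, signedCount (μ.peel (r + 2)) l = 0 := fun r hr =>
    ih _ (hn ▸ YoungDiagram.card_peel_lt (by simp at hr; omega))
      (YoungDiagram.mem_peel.2 ⟨h₁, by omega⟩) l rfl
  -- `μ.peel 0` and `μ.peel 1` differ only in their first row, which `(1, 1) ∈ μ` keeps nonempty.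
  have hpair : signedCount (μ.peel 1) l = signedCount (μ.peel 0) l := by
    refine signedCount_eq_of_rowLen_succ_eq ?_ (fun i => ?_) l
    · simp only [YoungDiagram.mem_peel, zero_add]
      omega
    · rw [YoungDiagram.rowLen_peel, YoungDiagram.rowLen_peel, if_neg (by omega), if_neg (by omega)]
  rw [signedCount_succ, hk, sum_range_succ', sum_range_succ', sum_congr rfl fun r hr => by
    rw [hrest r hr, mul_zero], sum_const_zero, hpair]
  rw [show k + 2 - (0 + 1) - 1 = k by omega, show k + 2 - 0 - 1 = k + 1 by omega, pow_succ]
  ring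

noncomputable def tabloidEquivHookSets (μ : YoungDiagram) (l : ℕ) :
    {T : SpecialRimHookTabloid μ // T.hooks.card = l} ≃
      ↥(tabloidHookSets μ l : Set (Finset (Finset (ℕ × ℕ)))) where
  toFun T := ⟨T.1.hooks, mem_tabloidHookSets.2 ⟨T.2, T.1.peelable⟩⟩
  invFun H := ⟨⟨H.1, (mem_tabloidHookSets.1 H.2).2⟩, (mem_tabloidHookSets.1 H.2).1⟩
  left_inv _ := rfl
  right_inv _ := rfl

theorem finsum_sign_eq_signedCount (μ : YoungDiagram) (l : ℕ) :
    ∑ᶠ T : {T : SpecialRimHookTabloid μ // T.hooks.card = l}, T.val.sign = signedCount μ l :=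
  calc ∑ᶠ T : {T : SpecialRimHookTabloid μ // T.hooks.card = l}, T.val.sign
      = ∑ᶠ T, hookSetSign (tabloidEquivHookSets μ l T).1 := rfl
    _ = ∑ᶠ H : ↥(tabloidHookSets μ l : Set _), hookSetSign H.1 :=
      finsum_comp_equiv (f := fun H => hookSetSign H.1) (tabloidEquivHookSets μ l)
    _ = signedCount μ l := by
      rw [finsum_set_coe_eq_finsum_mem, finsum_mem_coe_finset, signedCount]

theorem signed_sum_vanishes_of_not_hook_general
    (μ : YoungDiagram) (h22 : (1, 1) ∈ μ) (l : ℕ) :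
    ∑ᶠ T : {T : SpecialRimHookTabloid μ // T.hooks.card = l}, T.val.sign = 0 := by
  rw [finsum_sign_eq_signedCount]
  exact signedCount_eq_zero_of_one_one_mem h22 l

/-- If `μ` is a partition that is not a hook (i.e. its Ferrers diagram contains the cell
`(2,2)`, which in 0-indexed coordinates is `(1,1)`), then for every `ℓ ≥ 1` the signed sum
over all special rim hook tabloids of shape `μ` with exactly `ℓ` rim hooks vanishes. -/
theorem signed_sum_vanishes_of_not_hook
    (μ : YoungDiagram) (h22 : (1, 1) ∈ μ) (l : ℕ) (hl : 1 ≤ l) :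
    ∑ᶠ T : {T : SpecialRimHookTabloid μ // T.hooks.card = l}, T.val.sign = 0 :=
  signed_sum_vanishes_of_not_hook_general μ h22 l
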